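/- arXiv:1806.08580 — 2 statements merged into one kernel-verified Lean document; each statement's English description precedes it below -/
import Mathlib

section
/- Let L = L₀ ⊕ L₁ be a finite-dimensional real ℤ₂-graded Lie algebra and let L^{-1} be the Lie algebra with the same underlying vector space and bracket twisted by -1 on [L₁,L₁] (i.e. [u,v]^{-1} = -[u,v] for u,v ∈ L₁, unchanged otherwise). Then sign(κ_L) + sign(κ_{L^{-1}}) = 2·sign(κ_L|_{L₀}), where sign denotes the signature of the symmetric bilinear form. -/
/-!
Write `θ` for the grading involution, `+1` on `L₀` and `-1` on `L₁`. For `x` even and `u` odd,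
`ad x ∘ ad u` exchanges `L₀` and `L₁`, so it is traceless and `κ_L(L₀, L₁) = 0`. Pulled back
along `e`, `ad (e x) = ad x` for `x` even and `ad (e u) = ad u ∘ θ` for `u` odd; since
`θ ∘ ad v ∘ θ = -ad v` for `v` odd, the pulled-back Killing form of `L^{-1}` equals `κ_L` on `L₀`,
equals `-κ_L` on `L₁`, and again makes `L₀ ⊥ L₁`. Signatures add over orthogonal sums, so with
`s₁` the signature of `κ_L|L₁` the two Killing forms have signatures `s₀ + s₁` and `s₀ - s₁`, and
Sylvester's law of inertia says these are `s` and `s'`.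
-/

open LieAlgebra Module

/-- A real symmetric bilinear form `B` has signature `s` if, relative to some orthogonal
basis, the number of positive diagonal entries minus the number of negative diagonal entries
equals `s`. -/
def IsSignature {V : Type*} [AddCommGroup V] [Module ℝ V]
    (B : LinearMap.BilinForm ℝ V) (s : ℤ) : Prop :=
  ∃ (n : ℕ) (b : Basis (Fin n) ℝ V),
    (∀ i j, i ≠ j → B (b i) (b j) = 0) ∧
    (s : ℝ) = ∑ i, Real.sign (B (b i) (b i))

open Finset QuadraticMap QuadraticForm Set

lemma Real.sum_sign_eq_ncard_sub_ncard {ι : Type*} [Fintype ι] (f : ι → ℝ) :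
    ∑ i, Real.sign (f i) = ({i | 0 < f i}.ncard : ℝ) - {i | f i < 0}.ncard := by
  classical
  have hsign : ∀ x : ℝ, Real.sign x = (if 0 < x then 1 else 0) - (if x < 0 then 1 else 0) := by
    intro x
    rcases lt_trichotomy x 0 with h | rfl | h
    · simp [Real.sign_of_neg h, h, h.not_gt]
    · simp
    · simp [Real.sign_of_pos h, h, h.not_gt]
  simp only [hsign, sum_sub_distrib, sum_boole, Set.ncard_eq_toFinset_card', Set.toFinset_ofPred]

section Signature

variable {V : Type*} [AddCommGroup V] [Module ℝ V] {B : LinearMap.BilinForm ℝ V} {s t : ℤ}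

lemma equivalent_weightedSumSquares_of_basis {ι : Type*} [Fintype ι] (b : Basis ι ℝ V)
    (hb : ∀ i j, i ≠ j → B (b i) (b j) = 0) :
    B.toQuadraticMap.Equivalent (weightedSumSquares ℝ fun i => B (b i) (b i)) := by
  have hortho : (associated (R := ℝ) B.toQuadraticMap).IsOrthoᵢ b := fun i j hij => by
    simp [Function.onFun, associated_toQuadraticMap, hb i j hij, hb j i hij.symm]
  have := B.toQuadraticMap.basisRepr_eq_of_iIsOrtho b hortho
  exact ⟨this ▸ B.toQuadraticMap.isometryEquivBasisRepr b⟩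

lemma IsSignature.eq_sigPos_sub_sigNeg [FiniteDimensional ℝ V] (h : IsSignature B s) :
    s = (sigPos B.toQuadraticMap : ℤ) - sigNeg B.toQuadraticMap := by
  obtain ⟨n, b, hb, hs⟩ := h
  have hQ := equivalent_weightedSumSquares_of_basis b hb
  rw [sigPos_of_equiv_weightedSumSquares hQ, sigNeg_of_equiv_weightedSumSquares hQ]
  exact_mod_cast hs.trans (Real.sum_sign_eq_ncard_sub_ncard _)

lemma IsSignature.unique [FiniteDimensional ℝ V] (hs : IsSignature B s) (ht : IsSignature B t) :
    s = t :=
  hs.eq_sigPos_sub_sigNeg.trans ht.eq_sigPos_sub_sigNeg.symm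

lemma IsSignature.of_basis {ι : Type*} [Fintype ι] (b : Basis ι ℝ V)
    (hb : ∀ i j, i ≠ j → B (b i) (b j) = 0) (hs : (s : ℝ) = ∑ i, Real.sign (B (b i) (b i))) :
    IsSignature B s := by
  let e := Fintype.equivFin ι
  refine ⟨_, b.reindex e, fun i j hij => ?_, ?_⟩
  · simpa using hb _ _ (e.symm.injective.ne hij)
  · simpa [hs] using (e.symm.sum_comp fun i => Real.sign (B (b i) (b i))).symm

lemma exists_isSignature [FiniteDimensional ℝ V] (hB : LinearMap.IsSymm B) :
    ∃ s, IsSignature B s := by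
  obtain ⟨b, hb⟩ := LinearMap.BilinForm.exists_orthogonal_basis hB
  refine ⟨{i | 0 < B (b i) (b i)}.ncard - {i | B (b i) (b i) < 0}.ncard,
    .of_basis b (fun i j hij => hb hij) ?_⟩
  push_cast
  exact (Real.sum_sign_eq_ncard_sub_ncard _).symm

lemma IsSignature.neg (h : IsSignature B s) : IsSignature (-B) (-s) := by
  obtain ⟨n, b, hb, hs⟩ := h
  exact ⟨n, b, fun i j hij => by simp [hb i j hij], by simp [hs, Real.sign_neg]⟩

lemma IsSignature.of_comp {W : Type*} [AddCommGroup W] [Module ℝ W] {B : LinearMap.BilinForm ℝ W}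
    (e : V ≃ₗ[ℝ] W) (h : IsSignature (B.comp (e : V →ₗ[ℝ] W) e) s) : IsSignature B s := by
  obtain ⟨n, b, hb, hs⟩ := h
  exact ⟨n, b.map e, by simpa using hb, by simpa using hs⟩

lemma IsSignature.add_of_isCompl {p q : Submodule ℝ V} (hp : IsSignature (B.restrict p) s)
    (hq : IsSignature (B.restrict q) t) (hpq : IsCompl p q) (hB : LinearMap.IsSymm B)
    (horth : ∀ x ∈ p, ∀ y ∈ q, B x y = 0) : IsSignature B (s + t) := by
  obtain ⟨n, bp, hbp, hs⟩ := hp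
  obtain ⟨m, bq, hbq, ht⟩ := hq
  let b := (bp.prod bq).map (p.prodEquivOfIsCompl q hpq)
  have hb_inl : ∀ i, b (.inl i) = bp i := by simp [b]
  have hb_inr : ∀ i, b (.inr i) = bq i := by simp [b]
  refine .of_basis b ?_ ?_
  · rintro (i | i) (j | j) hij
    · simpa [hb_inl] using hbp i j (by simpa using hij)
    · simpa [hb_inl, hb_inr] using horth _ (bp i).2 _ (bq j).2
    · rw [hb_inl, hb_inr, ← hB.eq]; exact horth _ (bp j).2 _ (bq i).2
    · simpa [hb_inr] using hbq i j (by simpa using hij)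
  · simp [Fintype.sum_sum_type, hb_inl, hb_inr, hs, ht]

end Signature

section GradedEndomorphisms

variable {K V : Type*} [Field K] [AddCommGroup V] [Module K V] {p q : Submodule K V}
  {f g : Module.End K V}

variable (p q) in
def IsEvenEnd (f : Module.End K V) : Prop := MapsTo f p p ∧ MapsTo f q q

variable (p q) in
def IsOddEnd (f : Module.End K V) : Prop := MapsTo f p q ∧ MapsTo f q p

lemma IsEvenEnd.comp_isOddEnd (hf : IsEvenEnd p q f) (hg : IsOddEnd p q g) :
    IsOddEnd p q (f ∘ₗ g) :=
  ⟨hf.2.comp hg.1, hf.1.comp hg.2⟩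

lemma IsOddEnd.comp_isEvenEnd (hf : IsOddEnd p q f) (hg : IsEvenEnd p q g) :
    IsOddEnd p q (f ∘ₗ g) :=
  ⟨hf.1.comp hg.1, hf.2.comp hg.2⟩

lemma IsOddEnd.trace_eq_zero [FiniteDimensional K V] (hpq : IsCompl p q)
    (hf : IsOddEnd p q f) : LinearMap.trace K V f = 0 := by
  let N : Bool → Submodule K V := fun i => cond i q p
  have hN : DirectSum.IsInternal N := (DirectSum.isInternal_submodule_iff_isCompl N
    Bool.false_ne_true (by ext i; cases i <;> simp)).mpr hpq
  refine LinearMap.trace_eq_zero_of_mapsTo_ne hN not (by simp) fun i => ?_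
  cases i
  exacts [hf.1, hf.2]

variable (hpq : IsCompl p q)

noncomputable def gradingInvolution : Module.End K V :=
  LinearMap.ofIsCompl hpq p.subtype (-q.subtype)

lemma gradingInvolution_apply_of_mem_left {x : V} (hx : x ∈ p) : gradingInvolution hpq x = x :=
  LinearMap.ofIsCompl_apply_left hpq ⟨x, hx⟩

lemma gradingInvolution_apply_of_mem_right {x : V} (hx : x ∈ q) : gradingInvolution hpq x = -x :=
  LinearMap.ofIsCompl_apply_right hpq ⟨x, hx⟩

lemma isEvenEnd_gradingInvolution : IsEvenEnd p q (gradingInvolution hpq) :=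
  ⟨fun x hx => by simpa [gradingInvolution_apply_of_mem_left hpq hx],
    fun x hx => by simpa [gradingInvolution_apply_of_mem_right hpq hx]⟩

lemma IsOddEnd.gradingInvolution_comp_comp (hf : IsOddEnd p q f) :
    gradingInvolution hpq ∘ₗ f ∘ₗ gradingInvolution hpq = -f := by
  refine LinearMap.ext_on_codisjoint hpq.codisjoint (fun x hx => ?_) (fun x hx => ?_)
  · simp [gradingInvolution_apply_of_mem_left hpq hx,
      gradingInvolution_apply_of_mem_right hpq (hf.1 hx)]
  · simp [gradingInvolution_apply_of_mem_right hpq hx,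
      gradingInvolution_apply_of_mem_left hpq (hf.2 hx)]

end GradedEndomorphisms

section LieGrading

variable {K L M : Type*} [Field K] [LieRing L] [LieAlgebra K L] [LieRing M] [LieAlgebra K M]

structure IsZ2Grading (L0 L1 : Submodule K L) : Prop where
  isCompl : IsCompl L0 L1
  lie_mem_even_even : ∀ x ∈ L0, ∀ y ∈ L0, ⁅x, y⁆ ∈ L0
  lie_mem_even_odd : ∀ x ∈ L0, ∀ y ∈ L1, ⁅x, y⁆ ∈ L1
  lie_mem_odd_odd : ∀ x ∈ L1, ∀ y ∈ L1, ⁅x, y⁆ ∈ L0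

structure IsTwist (L0 L1 : Submodule K L) (e : L ≃ₗ[K] M) : Prop where
  map_lie_of_mem_even : ∀ x ∈ L0, ∀ y : L, e ⁅x, y⁆ = ⁅e x, e y⁆
  lie_map_of_mem_odd : ∀ u ∈ L1, ∀ v ∈ L1, ⁅e u, e v⁆ = -e ⁅u, v⁆

variable {L0 L1 : Submodule K L} {x y u v : L}

namespace IsZ2Grading

lemma isEvenEnd_ad (hL : IsZ2Grading L0 L1) (hx : x ∈ L0) : IsEvenEnd L0 L1 (ad K L x) :=
  ⟨fun _ hy => hL.lie_mem_even_even x hx _ hy, fun _ hy => hL.lie_mem_even_odd x hx _ hy⟩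

lemma isOddEnd_ad (hL : IsZ2Grading L0 L1) (hu : u ∈ L1) : IsOddEnd L0 L1 (ad K L u) :=
  ⟨fun z hz => by
    rw [ad_apply, ← lie_skew]
    exact neg_mem (hL.lie_mem_even_odd z hz u hu),
    fun _ hz => hL.lie_mem_odd_odd u hu _ hz⟩

lemma killingForm_eq_zero [FiniteDimensional K L] (hL : IsZ2Grading L0 L1) (hx : x ∈ L0)
    (hu : u ∈ L1) : killingForm K L x u = 0 := by
  rw [killingForm_apply_apply]
  exact ((hL.isEvenEnd_ad hx).comp_isOddEnd (hL.isOddEnd_ad hu)).trace_eq_zero hL.isCompl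

end IsZ2Grading

lemma killingForm_apply_eq_trace_of_ad_eq_conj (e : L ≃ₗ[K] M) {a b : L}
    {A B : Module.End K L} (ha : ad K M (e a) = e.conj A) (hb : ad K M (e b) = e.conj B) :
    killingForm K M (e a) (e b) = LinearMap.trace K L (A ∘ₗ B) := by
  rw [killingForm_apply_apply, ha, hb, ← LinearEquiv.conj_comp, LinearMap.trace_conj']

namespace IsTwist

variable {e : L ≃ₗ[K] M}

lemma ad_of_mem_even (ht : IsTwist L0 L1 e) (hx : x ∈ L0) :
    ad K M (e x) = e.conj (ad K L x) := by
  ext m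
  obtain ⟨z, rfl⟩ := e.surjective m
  simp [ht.map_lie_of_mem_even x hx]

lemma ad_of_mem_odd (ht : IsTwist L0 L1 e) (hL : IsZ2Grading L0 L1) (hu : u ∈ L1) :
    ad K M (e u) = e.conj (ad K L u ∘ₗ gradingInvolution hL.isCompl) := by
  suffices ad K M (e u) ∘ₗ e = e ∘ₗ ad K L u ∘ₗ gradingInvolution hL.isCompl by
    ext m
    obtain ⟨z, rfl⟩ := e.surjective m
    simpa using LinearMap.congr_fun this z
  refine LinearMap.ext_on_codisjoint hL.isCompl.codisjoint (fun z hz => ?_) (fun z hz => ?_)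
  · simp only [LinearMap.comp_apply, LinearEquiv.coe_coe, ad_apply,
      gradingInvolution_apply_of_mem_left _ hz]
    rw [← lie_skew, ← ht.map_lie_of_mem_even z hz, ← map_neg, lie_skew]
  · simp only [LinearMap.comp_apply, LinearEquiv.coe_coe, ad_apply,
      gradingInvolution_apply_of_mem_right _ hz, map_neg]
    exact ht.lie_map_of_mem_odd u hu z hz

lemma killingForm_apply_of_mem_even (ht : IsTwist L0 L1 e) (hx : x ∈ L0) (hy : y ∈ L0) :
    killingForm K M (e x) (e y) = killingForm K L x y := by
  rw [killingForm_apply_eq_trace_of_ad_eq_conj e (ht.ad_of_mem_even hx) (ht.ad_of_mem_even hy),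
    killingForm_apply_apply]

lemma killingForm_apply_of_mem_odd (ht : IsTwist L0 L1 e) (hL : IsZ2Grading L0 L1)
    (hu : u ∈ L1) (hv : v ∈ L1) : killingForm K M (e u) (e v) = -killingForm K L u v := by
  rw [killingForm_apply_eq_trace_of_ad_eq_conj e (ht.ad_of_mem_odd hL hu) (ht.ad_of_mem_odd hL hv),
    LinearMap.comp_assoc, (hL.isOddEnd_ad hv).gradingInvolution_comp_comp, LinearMap.comp_neg,
    map_neg, killingForm_apply_apply]

lemma killingForm_apply_of_mem_even_of_mem_odd [FiniteDimensional K L] (ht : IsTwist L0 L1 e)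
    (hL : IsZ2Grading L0 L1) (hx : x ∈ L0) (hu : u ∈ L1) : killingForm K M (e x) (e u) = 0 := by
  rw [killingForm_apply_eq_trace_of_ad_eq_conj e (ht.ad_of_mem_even hx) (ht.ad_of_mem_odd hL hu)]
  exact ((hL.isEvenEnd_ad hx).comp_isOddEnd ((hL.isOddEnd_ad hu).comp_isEvenEnd
    (isEvenEnd_gradingInvolution hL.isCompl))).trace_eq_zero hL.isCompl

lemma killingForm_comp_restrict_even (ht : IsTwist L0 L1 e) :
    ((killingForm K M).comp (e : L →ₗ[K] M) e).restrict L0 = (killingForm K L).restrict L0 :=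
  LinearMap.BilinForm.ext fun x y => ht.killingForm_apply_of_mem_even x.2 y.2

lemma killingForm_comp_restrict_odd (ht : IsTwist L0 L1 e) (hL : IsZ2Grading L0 L1) :
    ((killingForm K M).comp (e : L →ₗ[K] M) e).restrict L1 =
      -(killingForm K L).restrict L1 :=
  LinearMap.BilinForm.ext fun u v => ht.killingForm_apply_of_mem_odd hL u.2 v.2

end IsTwist
end LieGrading

/-- For a finite-dimensional real `ℤ₂`-graded Lie algebra `L = L₀ ⊕ L₁` and
the Lie algebra `L^{-1}` (realized via a linear equivalence `e : L ≃ₗ[ℝ] M`) whose bracket is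
twisted by `-1` on `[L₁, L₁]`, one has
`sign(κ_L) + sign(κ_{L^{-1}}) = 2·sign(κ_L|_{L₀})`. -/
theorem signature_add_signature_twisted {L M : Type*} [LieRing L] [LieAlgebra ℝ L]
    [Module.Finite ℝ L] [LieRing M] [LieAlgebra ℝ M] [Module.Finite ℝ M]
    (L0 L1 : Submodule ℝ L) (hcompl : IsCompl L0 L1)
    (h00 : ∀ x ∈ L0, ∀ y ∈ L0, ⁅x, y⁆ ∈ L0)
    (h01 : ∀ x ∈ L0, ∀ y ∈ L1, ⁅x, y⁆ ∈ L1)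
    (h11 : ∀ x ∈ L1, ∀ y ∈ L1, ⁅x, y⁆ ∈ L0)
    (e : L ≃ₗ[ℝ] M)
    (he0 : ∀ x ∈ L0, ∀ y : L, e ⁅x, y⁆ = ⁅e x, e y⁆)
    (he1 : ∀ u ∈ L1, ∀ v ∈ L1, ⁅e u, e v⁆ = - e ⁅u, v⁆)
    (s s' s0 : ℤ)
    (hs : IsSignature (killingForm ℝ L) s)
    (hs' : IsSignature (killingForm ℝ M) s')
    (hs0 : IsSignature ((killingForm ℝ L).restrict L0) s0) :
    s + s' = 2 * s0 := by
  have hL : IsZ2Grading L0 L1 := ⟨hcompl, h00, h01, h11⟩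
  have ht : IsTwist L0 L1 e := ⟨he0, he1⟩
  have hκL := LieModule.traceForm_isSymm ℝ L L
  obtain ⟨s1, hs1⟩ :=
    exists_isSignature (B := (killingForm ℝ L).restrict L1) ⟨fun u v => hκL.eq u v⟩
  have hsL : IsSignature (killingForm ℝ L) (s0 + s1) :=
    hs0.add_of_isCompl hs1 hcompl hκL fun x hx u hu => hL.killingForm_eq_zero hx hu
  have hsM : IsSignature (killingForm ℝ M) (s0 + -s1) := by
    refine .of_comp e (.add_of_isCompl ?_ ?_ hcompl ?_ ?_)
    · rwa [ht.killingForm_comp_restrict_even]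
    · rw [ht.killingForm_comp_restrict_odd hL]
      exact hs1.neg
    · exact ⟨fun x y => (LieModule.traceForm_isSymm ℝ M M).eq (e x) (e y)⟩
    · exact fun x hx u hu => ht.killingForm_apply_of_mem_even_of_mem_odd hL hx hu
  rw [hs.unique hsL, hs'.unique hsM]
  ring
end

section
/- Let S be a complex semisimple Lie algebra, σ a conjugation (conjugate-linear involutive automorphism) of S, and θ an involutive ℂ-linear automorphism of S commuting with σ such that the conjugation θσ is compact (its fixed real form has negative definite Killing form). Then the signature of the Killing form of the real form S^σ = {x ∈ S : σ(x) = x} equals dim_ℂ S - 2·dim_ℂ fix(θ), where fix(θ) = {x ∈ S : θ(x) = x}. -/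
/-!
Write `𝔤 = S^σ` and `𝔲 = S^{θσ}`. Since `S = 𝔤 ⊕ i𝔤` as a real space, a `ℂ`-linear map of `S`
preserving `𝔤` has twice its trace on `𝔤` as real trace on `S`; so the Killing form of `𝔤` is
half of `tr_ℝ (ad x ∘ ad y)` on `S`, and the same holds for `𝔲`. The involution `θ` restricts
to an automorphism of `𝔤`, whose `±1`-eigenspaces `𝔤 = 𝔨 ⊕ 𝔭` are orthogonal for the
`θ`-invariant Killing form. Now `𝔨 ⊆ 𝔲` and `i𝔭 ⊆ 𝔲`, and `ad (i x)² = -(ad x)²`, so the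
compactness of `𝔲` makes the Killing form of `𝔤` negative definite on `𝔨` and positive definite
on `𝔭`. Finally `𝔨` is a real form of `fix θ` and `𝔤` one of `S`, so
`dim 𝔨 = dim_ℂ fix θ` and `dim 𝔨 + dim 𝔭 = dim_ℂ S`.
-/

open LieAlgebra Module

variable {S : Type*} [LieRing S] [LieAlgebra ℂ S] [LieAlgebra ℝ S] [IsScalarTower ℝ ℂ S]

/-- The fixed points of an `ℝ`-linear Lie algebra endomorphism, as a real Lie subalgebra. -/
def fixR (f : S →ₗ⁅ℝ⁆ S) : LieSubalgebra ℝ S :=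
  { carrier := {x | f x = x}
    add_mem' := by
      intro a b ha hb
      simp only [Set.mem_setOf_eq] at *
      rw [map_add f, ha, hb]
    zero_mem' := by
      simp only [Set.mem_setOf_eq]
      exact f.map_zero
    smul_mem' := by
      intro c x hx
      simp only [Set.mem_setOf_eq] at *
      rw [map_smul f, hx]
    lie_mem' := by
      intro x y hx hy
      simp only [Set.mem_setOf_eq] at *
      rw [f.map_lie, hx, hy] }

/-- The fixed points of a `ℂ`-linear involutive automorphism `θ`, as a complex submodule. -/
def fixC (θ : S →ₗ⁅ℝ⁆ S) (hθ : ∀ (c : ℂ) (x : S), θ (c • x) = c • θ x) : Submodule ℂ S :=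
  { carrier := {x | θ x = x}
    add_mem' := by
      intro a b ha hb
      simp only [Set.mem_setOf_eq] at *
      rw [map_add θ, ha, hb]
    zero_mem' := by
      simp only [Set.mem_setOf_eq]
      exact θ.map_zero
    smul_mem' := by
      intro c x hx
      simp only [Set.mem_setOf_eq] at *
      rw [hθ, hx] }

open ComplexConjugate

section Conjugation

variable {V W : Type*} [AddCommGroup V] [Module ℂ V] [Module ℝ V] [AddCommGroup W]
  [Module ℝ W]

structure IsConjugation (φ : V →ₗ[ℝ] V) : Prop where
  map_complex_smul : ∀ (c : ℂ) (x : V), φ (c • x) = conj c • φ x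
  involutive : Function.Involutive φ

namespace IsConjugation

variable {φ : V →ₗ[ℝ] V} (hφ : IsConjugation φ)
include hφ

lemma comp {θ : V →ₗ[ℝ] V} (hθc : ∀ (c : ℂ) (x : V), θ (c • x) = c • θ x)
    (hθ : Function.Involutive θ) (hcomm : ∀ x, θ (φ x) = φ (θ x)) :
    IsConjugation (θ ∘ₗ φ) where
  map_complex_smul c x := by
    rw [LinearMap.comp_apply, hφ.map_complex_smul, hθc, LinearMap.comp_apply]
  involutive x := by
    rw [LinearMap.comp_apply, LinearMap.comp_apply, ← hcomm, hφ.involutive, hθ]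

lemma restrict [IsScalarTower ℝ ℂ V] (F : Submodule ℂ V) (hF : ∀ x ∈ F, φ x ∈ F) :
    IsConjugation (V := F)
      (φ.restrict (p := F.restrictScalars ℝ) (q := F.restrictScalars ℝ) hF) where
  map_complex_smul c x := Subtype.ext (hφ.map_complex_smul c x)
  involutive x := Subtype.ext (hφ.involutive x)

end IsConjugation

variable [IsScalarTower ℝ ℂ V]

noncomputable def complexifyMap (ι : W →ₗ[ℝ] V) : W × W →ₗ[ℝ] V :=
  ι.coprod (Complex.I • ι)

lemma complexifyMap_apply (ι : W →ₗ[ℝ] V) (p : W × W) :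
    complexifyMap ι p = ι p.1 + Complex.I • ι p.2 := rfl

namespace IsConjugation

variable {φ : V →ₗ[ℝ] V} (hφ : IsConjugation φ) {ι : W →ₗ[ℝ] V}
  (hι : Function.Injective ι) (hrange : ∀ x, x ∈ LinearMap.range ι ↔ φ x = x)
include hφ hι hrange

lemma bijective_complexifyMap : Function.Bijective (complexifyMap ι) := by
  refine ⟨(injective_iff_map_eq_zero _).2 fun ⟨a, b⟩ hab ↦ ?_, fun x ↦ ?_⟩
  · have hfix (w : W) : φ (ι w) = ι w := (hrange _).1 ⟨w, rfl⟩
    rw [complexifyMap_apply] at hab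
    have hconj : ι a - Complex.I • ι b = 0 := by
      simpa [hφ.map_complex_smul, hfix, sub_eq_add_neg] using congrArg φ hab
    have ha : ι a = 0 := by
      have : (2 : ℝ) • ι a = 0 := by linear_combination (norm := module) hab + hconj
      simpa using this
    have hb : ι b = 0 := by simpa [ha, Complex.I_ne_zero] using hab
    rw [Prod.mk_eq_zero]
    exact ⟨hι (ha.trans ι.map_zero.symm), hι (hb.trans ι.map_zero.symm)⟩
  · have hre : φ ((2⁻¹ : ℂ) • (x + φ x)) = (2⁻¹ : ℂ) • (x + φ x) := by
      rw [hφ.map_complex_smul, map_add, hφ.involutive, add_comm]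
      simp [Complex.conj_ofNat]
    have him : φ ((2⁻¹ * -Complex.I) • (x - φ x)) = (2⁻¹ * -Complex.I) • (x - φ x) := by
      rw [hφ.map_complex_smul, map_sub, hφ.involutive, ← neg_sub, smul_neg, ← neg_smul]
      simp [Complex.conj_ofNat]
    obtain ⟨a, ha⟩ := (hrange _).2 hre
    obtain ⟨b, hb⟩ := (hrange _).2 him
    refine ⟨(a, b), ?_⟩
    rw [complexifyMap_apply, ha, hb, smul_smul,
      show Complex.I * (2⁻¹ * -Complex.I) = 2⁻¹ by linear_combination -(2 : ℂ)⁻¹ * Complex.I_sq]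
    module

noncomputable def complexifyEquiv : (W × W) ≃ₗ[ℝ] V :=
  LinearEquiv.ofBijective _ (hφ.bijective_complexifyMap hι hrange)

lemma complexifyEquiv_apply (p : W × W) :
    hφ.complexifyEquiv hι hrange p = ι p.1 + Complex.I • ι p.2 := rfl

variable [Module.Finite ℂ V]

lemma finrank_eq_finrank_complex : finrank ℝ W = finrank ℂ V := by
  have : Module.Finite ℝ V := .trans ℂ V
  have : Module.Finite ℝ W := .of_injective ι hι
  have hW := (hφ.complexifyEquiv hι hrange).finrank_eq
  have hV := Module.finrank_mul_finrank ℝ ℂ V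
  rw [finrank_prod, Complex.finrank_real_complex] at *
  omega

lemma trace_eq_two_mul_trace {f : V →ₗ[ℝ] V} {g : W →ₗ[ℝ] W}
    (hf : ∀ x, f (Complex.I • x) = Complex.I • f x) (hfg : ∀ w, f (ι w) = ι (g w)) :
    LinearMap.trace ℝ V f = 2 * LinearMap.trace ℝ W g := by
  have : Module.Finite ℝ V := .trans ℂ V
  have : Module.Finite ℝ W := .of_injective ι hι
  set e := hφ.complexifyEquiv hι hrange
  have hconj : f = e.conj (g.prodMap g) := by
    ext x
    obtain ⟨p, rfl⟩ := e.surjective x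
    rw [LinearEquiv.conj_apply_apply, e.symm_apply_apply]
    simp only [e, complexifyEquiv_apply, LinearMap.prodMap_apply, map_add, hf, hfg]
  rw [hconj, LinearMap.trace_conj', LinearMap.trace_prodMap', two_mul]

end IsConjugation

end Conjugation

lemma Module.End.isCompl_eigenspace_one_neg_one {K M : Type*} [Field K] [NeZero (2 : K)]
    [AddCommGroup M] [Module K M] {f : Module.End K M} (hf : Function.Involutive f) :
    IsCompl (f.eigenspace 1) (f.eigenspace (-1)) := by
  simp only [isCompl_iff, disjoint_iff, codisjoint_iff, Submodule.eq_bot_iff,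
    Submodule.eq_top_iff', Submodule.mem_inf, Module.End.mem_eigenspace_iff, one_smul,
    neg_one_smul]
  refine ⟨fun x ⟨h1, h2⟩ ↦ ?_, fun x ↦ Submodule.mem_sup.2
    ⟨(2⁻¹ : K) • (x + f x), ?_, (2⁻¹ : K) • (x - f x), ?_, ?_⟩⟩
  · have : (2 : K) • x = 0 := by rw [two_smul]; nth_rw 1 [← h1]; rw [h2, neg_add_cancel]
    exact (smul_eq_zero.1 this).resolve_left two_ne_zero
  · rw [Module.End.mem_eigenspace_iff, one_smul, map_smul, map_add, hf x, add_comm]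
  · rw [Module.End.mem_eigenspace_iff, neg_one_smul, map_smul, map_sub, hf x, ← smul_neg,
      neg_sub]
  · rw [← smul_add, add_add_sub_cancel, ← two_smul K, smul_smul, inv_mul_cancel₀ two_ne_zero,
      one_smul]

lemma killingForm_eq_zero_of_mem_eigenspace_one_neg_one {K L : Type*} [Field K]
    [NeZero (2 : K)] [LieRing L] [LieAlgebra K L] {f : L →ₗ⁅K⁆ L} (hf : Function.Bijective f)
    {x y : L} (hx : x ∈ Module.End.eigenspace f.toLinearMap 1)
    (hy : y ∈ Module.End.eigenspace f.toLinearMap (-1)) :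
    killingForm K L x y = 0 := by
  have h : killingForm K L (f x) (f y) = killingForm K L x y :=
    killingForm_of_equiv_apply (LieEquiv.ofBijective f hf) x y
  rw [Module.End.mem_eigenspace_iff, one_smul, LieHom.coe_toLinearMap] at hx
  rw [Module.End.mem_eigenspace_iff, neg_one_smul, LieHom.coe_toLinearMap] at hy
  rw [hx, hy, map_neg] at h
  have h2 : 2 * killingForm K L x y = 0 := by linear_combination -h
  exact (mul_eq_zero.1 h2).resolve_left two_ne_zero

section Signature

variable {V : Type*} [AddCommGroup V] [Module ℝ V] {B : LinearMap.BilinForm ℝ V}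

lemma isSignature_of_basis {ι : Type*} [Fintype ι] (b : Basis ι ℝ V) (hb : B.IsOrthoᵢ b)
    {s : ℤ} (hs : (s : ℝ) = ∑ i, Real.sign (B (b i) (b i))) : IsSignature B s := by
  let e := Fintype.equivFin ι
  refine ⟨Fintype.card ι, b.reindex e, fun i j hij ↦ ?_, ?_⟩
  · simpa using hb (e.symm.injective.ne hij)
  · rw [hs, ← e.symm.sum_comp]
    simp

lemma isSignature_of_isCompl [FiniteDimensional ℝ V] (hB : LinearMap.IsSymm B)
    {N P : Submodule ℝ V} (hNP : IsCompl N P) (hortho : ∀ x ∈ N, ∀ y ∈ P, B x y = 0)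
    (hneg : ∀ x ∈ N, x ≠ 0 → B x x < 0) (hpos : ∀ x ∈ P, x ≠ 0 → 0 < B x x) :
    IsSignature B (finrank ℝ P - finrank ℝ N) := by
  have : Invertible (2 : ℝ) := invertibleOfNonzero two_ne_zero
  obtain ⟨bN, hbN⟩ := LinearMap.BilinForm.exists_orthogonal_basis (hB.domRestrict N)
  obtain ⟨bP, hbP⟩ := LinearMap.BilinForm.exists_orthogonal_basis (hB.domRestrict P)
  let b := (bN.prod bP).map (Submodule.prodEquivOfIsCompl N P hNP)
  have hb : ∀ i, b i = Sum.elim (fun i ↦ (bN i : V)) (fun i ↦ (bP i : V)) i := by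
    rintro (i | i) <;> simp [b]
  refine isSignature_of_basis b ?_ ?_
  · rintro (i | i) (j | j) hij <;> show B (b _) (b _) = 0 <;> rw [hb, hb]
    · exact hbN (by simpa using hij)
    · exact hortho _ (bN i).2 _ (bP j).2
    · rw [← hB.eq]
      exact hortho _ (bN j).2 _ (bP i).2
    · exact hbP (by simpa using hij)
  · have hsignN (i) : Real.sign (B (bN i) (bN i)) = -1 :=
      Real.sign_of_neg (hneg _ (bN i).2 (by simpa using bN.ne_zero i))
    have hsignP (i) : Real.sign (B (bP i) (bP i)) = 1 :=
      Real.sign_of_pos (hpos _ (bP i).2 (by simpa using bP.ne_zero i))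
    simp only [hb, Fintype.sum_sum_type, Sum.elim_inl, Sum.elim_inr, hsignN, hsignP,
      Finset.sum_neg_distrib, Finset.sum_const, Finset.card_univ, Fintype.card_fin, nsmul_eq_mul,
      mul_one]
    push_cast
    ring

end Signature

section RealForm

variable {L : Type*} [LieRing L] [LieAlgebra ℝ L]

lemma mem_range_fixR_subtype (σ : L →ₗ⁅ℝ⁆ L) (x : L) :
    x ∈ LinearMap.range (fixR σ).toSubmodule.subtype ↔ σ x = x := by
  rw [Submodule.range_subtype]
  rfl

variable [LieAlgebra ℂ L]

lemma ad_I_smul_comp_ad_I_smul (x y : L) :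
    ad ℝ L (Complex.I • x) ∘ₗ ad ℝ L (Complex.I • y) = -(ad ℝ L x ∘ₗ ad ℝ L y) := by
  ext z
  simp [smul_lie, lie_smul, smul_smul]

variable [IsScalarTower ℝ ℂ L] [Module.Finite ℂ L]

lemma two_mul_killingForm_fixR {σ : L →ₗ⁅ℝ⁆ L} (hσ : IsConjugation (σ : L →ₗ[ℝ] L))
    (x y : fixR σ) :
    2 * killingForm ℝ (fixR σ) x y = LinearMap.trace ℝ L (ad ℝ L x ∘ₗ ad ℝ L y) := by
  rw [killingForm_apply_apply, hσ.trace_eq_two_mul_trace Subtype.val_injective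
    (mem_range_fixR_subtype σ) (g := ad ℝ (fixR σ) x ∘ₗ ad ℝ (fixR σ) y)
    (fun z ↦ by simp [lie_smul]) (fun w ↦ rfl)]
  rfl

variable {σ τ : L →ₗ⁅ℝ⁆ L} (hσ : IsConjugation (σ : L →ₗ[ℝ] L))
  (hτ : IsConjugation (τ : L →ₗ[ℝ] L)) {x : fixR σ} {y : fixR τ}
include hσ hτ

lemma killingForm_fixR_eq_of_coe_eq (h : (y : L) = x) :
    killingForm ℝ (fixR τ) y y = killingForm ℝ (fixR σ) x x := by
  have hx := two_mul_killingForm_fixR hσ x x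
  have hy := two_mul_killingForm_fixR hτ y y
  rw [h] at hy
  linarith

lemma killingForm_fixR_eq_neg_of_coe_eq_I_smul (h : (y : L) = Complex.I • x) :
    killingForm ℝ (fixR τ) y y = -killingForm ℝ (fixR σ) x x := by
  have hx := two_mul_killingForm_fixR hσ x x
  have hy := two_mul_killingForm_fixR hτ y y
  rw [h, ad_I_smul_comp_ad_I_smul, map_neg] at hy
  linarith

end RealForm

section CartanDecomposition

variable {L : Type*} [LieRing L] [LieAlgebra ℝ L]

def restrictFixR (θ σ : L →ₗ⁅ℝ⁆ L) (hcomm : ∀ x, θ (σ x) = σ (θ x)) :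
    fixR σ →ₗ⁅ℝ⁆ fixR σ where
  toFun x := ⟨θ x, show σ (θ x) = θ x by rw [← hcomm]; exact congrArg θ x.2⟩
  map_add' x y := Subtype.ext (map_add θ (x : L) y)
  map_smul' c x := Subtype.ext (map_smul θ c (x : L))
  map_lie' := Subtype.ext (θ.map_lie _ _)

variable {θ σ : L →ₗ⁅ℝ⁆ L} (hcomm : ∀ x, θ (σ x) = σ (θ x))

lemma restrictFixR_involutive (hθ : Function.Involutive θ) :
    Function.Involutive (restrictFixR θ σ hcomm) :=
  fun x ↦ Subtype.ext (hθ x)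

variable [LieAlgebra ℂ L] [IsScalarTower ℝ ℂ L] [Module.Finite ℂ L]
  (hσ : IsConjugation (σ : L →ₗ[ℝ] L))
include hσ

lemma finrank_eigenspace_one_restrictFixR (hθc : ∀ (c : ℂ) (x : L), θ (c • x) = c • θ x) :
    finrank ℝ (Module.End.eigenspace (restrictFixR θ σ hcomm).toLinearMap 1) =
      finrank ℂ (fixC θ hθc) := by
  set K := Module.End.eigenspace (restrictFixR θ σ hcomm).toLinearMap 1
  set F := fixC θ hθc
  have hθK (v : K) : θ v = v :=
    congrArg Subtype.val ((Module.End.mem_eigenspace_iff.1 v.2).trans (one_smul ℝ _))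
  have hσF (x : L) (hx : x ∈ F) : σ x ∈ F := (hcomm x).trans (congrArg σ hx)
  let ι : K →ₗ[ℝ] F := LinearMap.codRestrict (F.restrictScalars ℝ)
    ((fixR σ).toSubmodule.subtype ∘ₗ K.subtype) hθK
  have hι : Function.Injective ι := fun v w h ↦
    Subtype.ext (Subtype.ext (congrArg (Subtype.val : F → L) h))
  -- `(V := F)`: `F` with its own real structure, not that of `F.restrictScalars ℝ`
  refine IsConjugation.finrank_eq_finrank_complex (V := F) (hσ.restrict F hσF) hι
    fun x ↦ ⟨?_, fun h ↦ ?_⟩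
  · rintro ⟨v, rfl⟩
    exact Subtype.ext (v : fixR σ).2
  · refine ⟨⟨⟨x, congrArg Subtype.val h⟩, ?_⟩, rfl⟩
    rw [Module.End.mem_eigenspace_iff, one_smul]
    exact Subtype.ext x.2

variable (hτ : IsConjugation ((θ.comp σ : L →ₗ⁅ℝ⁆ L) : L →ₗ[ℝ] L))
  (hcompact : ∀ y : fixR (θ.comp σ), y ≠ 0 → killingForm ℝ (fixR (θ.comp σ)) y y < 0)
  {x : fixR σ} (hx0 : x ≠ 0)
include hτ hcompact hx0

lemma killingForm_fixR_neg_of_mem_eigenspace_one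
    (hx : x ∈ Module.End.eigenspace (restrictFixR θ σ hcomm).toLinearMap 1) :
    killingForm ℝ (fixR σ) x x < 0 := by
  have hθx : θ x = x :=
    congrArg Subtype.val ((Module.End.mem_eigenspace_iff.1 hx).trans (one_smul ℝ x))
  let y : fixR (θ.comp σ) := ⟨x, show θ (σ x) = x from (congrArg θ x.2).trans hθx⟩
  rw [← killingForm_fixR_eq_of_coe_eq hσ hτ (y := y) rfl]
  exact hcompact y fun h ↦ hx0 (Subtype.ext (congrArg (Subtype.val : fixR (θ.comp σ) → L) h))

lemma killingForm_fixR_pos_of_mem_eigenspace_neg_one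
    (hθc : ∀ (c : ℂ) (x : L), θ (c • x) = c • θ x)
    (hx : x ∈ Module.End.eigenspace (restrictFixR θ σ hcomm).toLinearMap (-1)) :
    0 < killingForm ℝ (fixR σ) x x := by
  have hθx : θ x = -x :=
    congrArg Subtype.val ((Module.End.mem_eigenspace_iff.1 hx).trans (neg_one_smul ℝ x))
  have hσx : σ (Complex.I • (x : L)) = -(Complex.I • x) := by
    simpa [Complex.conj_I, show σ x = x from x.2] using hσ.map_complex_smul Complex.I x
  have hy : θ (σ (Complex.I • x)) = Complex.I • x := by
    rw [hσx, map_neg, hθc, hθx, smul_neg, neg_neg]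
  let y : fixR (θ.comp σ) := ⟨Complex.I • x, hy⟩
  have hy0 : y ≠ 0 := fun h ↦ hx0 (Subtype.ext
    ((smul_eq_zero.1 (congrArg Subtype.val h)).resolve_left Complex.I_ne_zero))
  have := hcompact y hy0
  rw [killingForm_fixR_eq_neg_of_coe_eq_I_smul hσ hτ (y := y) rfl] at this
  linarith

end CartanDecomposition

theorem signature_real_form_eq_general [Module.Finite ℂ S]
    (σ θ : S →ₗ⁅ℝ⁆ S)
    (hσconj : ∀ (c : ℂ) (x : S), σ (c • x) = (starRingEnd ℂ) c • σ x)
    (hσ2 : ∀ x, σ (σ x) = x)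
    (hθc : ∀ (c : ℂ) (x : S), θ (c • x) = c • θ x)
    (hθ2 : ∀ x, θ (θ x) = x)
    (hcomm : ∀ x, θ (σ x) = σ (θ x))
    (hcompact : ∀ x : fixR (θ.comp σ), x ≠ 0 →
      killingForm ℝ (fixR (θ.comp σ)) x x < 0) :
    IsSignature (killingForm ℝ (fixR σ))
      ((finrank ℂ S : ℤ) - 2 * (finrank ℂ (fixC θ hθc) : ℤ)) := by
  have : Module.Finite ℝ S := .trans ℂ S
  have hσ : IsConjugation (σ : S →ₗ[ℝ] S) := ⟨hσconj, hσ2⟩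
  have hτ : IsConjugation ((θ.comp σ : S →ₗ⁅ℝ⁆ S) : S →ₗ[ℝ] S) := hσ.comp hθc hθ2 hcomm
  have hθ' := restrictFixR_involutive hcomm hθ2
  have hKP := Module.End.isCompl_eigenspace_one_neg_one hθ'
  have hdim_fixR : finrank ℝ (fixR σ) = finrank ℂ S :=
    hσ.finrank_eq_finrank_complex Subtype.val_injective (mem_range_fixR_subtype σ)
  have hdim_K := finrank_eigenspace_one_restrictFixR hcomm hσ hθc
  have hdim_KP := Submodule.finrank_add_eq_of_isCompl hKP
  convert isSignature_of_isCompl (LieModule.traceForm_isSymm ℝ _ _) hKP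
    (fun x hx y hy ↦ killingForm_eq_zero_of_mem_eigenspace_one_neg_one hθ'.bijective hx hy)
    (fun x hx hx0 ↦ killingForm_fixR_neg_of_mem_eigenspace_one hcomm hσ hτ hcompact hx0 hx)
    (fun x hx hx0 ↦
      killingForm_fixR_pos_of_mem_eigenspace_neg_one hcomm hσ hτ hcompact hx0 hθc hx)
    using 1
  omega

/-- Let `S` be a complex semisimple Lie algebra, `σ` a conjugation of `S`,
and `θ` an involutive `ℂ`-linear automorphism commuting with `σ` such that the conjugation
`θσ` is compact (the Killing form of its fixed real form is negative definite).  Then the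
signature of the Killing form of the real form `S^σ` equals
`dim_ℂ S - 2 · dim_ℂ fix(θ)`. -/
theorem signature_real_form_eq [Module.Finite ℂ S] [LieAlgebra.IsSemisimple ℂ S]
    (σ θ : S →ₗ⁅ℝ⁆ S)
    (hσconj : ∀ (c : ℂ) (x : S), σ (c • x) = (starRingEnd ℂ) c • σ x)
    (hσ2 : ∀ x, σ (σ x) = x)
    (hθc : ∀ (c : ℂ) (x : S), θ (c • x) = c • θ x)
    (hθ2 : ∀ x, θ (θ x) = x)
    (hcomm : ∀ x, θ (σ x) = σ (θ x))
    (hcompact : ∀ x : fixR (θ.comp σ), x ≠ 0 →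
      killingForm ℝ (fixR (θ.comp σ)) x x < 0) :
    IsSignature (killingForm ℝ (fixR σ))
      ((finrank ℂ S : ℤ) - 2 * (finrank ℂ (fixC θ hθc) : ℤ)) :=
  signature_real_form_eq_general σ θ hσconj hσ2 hθc hθ2 hcomm hcompact
end
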